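/- arXiv:2311.04204 — 2 statements merged into one kernel-verified Lean document; each statement's English description precedes it below -/
import Mathlib

section
/- Consider the planted k-clique model with edge probability p such that binom(n,k)·p^{binom(k,2)} ≥ 100. Then for the planted graph Y, the probability that Y contains exactly one k-clique (namely the planted one) is at most 0.01. Consequently, no estimator can exactly recover the planted clique with probability greater than 0.01 plus the probability that Y contains more than one k-clique under the posterior-ambiguity argument; in particular exact recovery with probability ≥ 0.9 is impossible. -/
open Finset Filter

/-- Potential edges of a graph on `n` labeled vertices. -/
abbrev EdgeType (n : ℕ) := {e : Sym2 (Fin n) // ¬ e.IsDiag}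

open scoped Classical in
/-- Probability of event `A` under the product Bernoulli(p) measure on `α → Bool`. -/
noncomputable def Prw {α : Type*} [Fintype α] [DecidableEq α] (p : ℝ)
    (A : (α → Bool) → Prop) : ℝ :=
  ∑ x : α → Bool, if A x then (∏ i, if x i then p else 1 - p) else 0

open scoped Classical in
/-- The number of `k`-cliques of the graph `y`. -/
noncomputable def cliqueCount (n k : ℕ) (y : EdgeType n → Bool) : ℕ :=
  (Finset.univ.filter (fun T : Finset (Fin n) => T.card = k ∧
    ∀ e : EdgeType n, (∀ v ∈ e.1, v ∈ T) → y e = true)).card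

open scoped Classical in
/-- The graph obtained by planting a clique on `S` on top of the noise graph `x`. -/
noncomputable def plantGraph (n : ℕ) (S : Finset (Fin n)) (x : EdgeType n → Bool) :
    EdgeType n → Bool :=
  fun e => if ∀ v ∈ e.1, v ∈ S then true else x e

/-! Forcing the edges inside `S` to be present reweights the Bernoulli(`p`) law on graphs by the
likelihood ratio `1{S is a clique} / p ^ C(k, 2)`. Averaging over the `C(n, k)` choices of `S`, the
planted probability of an event `B S y` is therefore the `G(n, p)` expectation of the number of
`k`-cliques `S` of `y` with `B S y`, divided by `C(n, k) p ^ C(k, 2) ≥ 100`. For "exactly one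
`k`-clique" and for "the estimator returns `S`" at most one `S` qualifies in each graph. -/

open scoped Classical

section Bernoulli

variable {α : Type*} [Fintype α]

def bernoulliWeight (p : ℝ) (x : α → Bool) : ℝ :=
  ∏ i, if x i then p else 1 - p

theorem bernoulliWeight_nonneg {p : ℝ} (hp : 0 ≤ p) (hp1 : p ≤ 1) (x : α → Bool) :
    0 ≤ bernoulliWeight p x :=
  prod_nonneg fun i _ => by split <;> linarith

theorem bernoulliWeight_piEquivPiSubtypeProd_symm (P : α → Prop) [DecidablePred P] (p : ℝ)
    (a : {i // P i} → Bool) (b : {i // ¬P i} → Bool) :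
    bernoulliWeight p ((Equiv.piEquivPiSubtypeProd P fun _ => Bool).symm (a, b)) =
      bernoulliWeight p a * bernoulliWeight p b := by
  rw [bernoulliWeight, ← Fintype.prod_subtype_mul_prod_subtype P]
  congr 1 <;> refine prod_congr rfl fun i _ => ?_ <;> simp [i.2]

theorem bernoulliWeight_const_true (p : ℝ) :
    bernoulliWeight p (fun _ : α => true) = p ^ Fintype.card α := by
  simp [bernoulliWeight]

variable [DecidableEq α]

theorem Prw_eq_sum_bernoulliWeight (p : ℝ) (A : (α → Bool) → Prop) :
    Prw p A = ∑ x : α → Bool, if A x then bernoulliWeight p x else 0 :=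
  rfl

theorem sum_bernoulliWeight (p : ℝ) : ∑ x : α → Bool, bernoulliWeight p x = 1 := by
  unfold bernoulliWeight
  rw [← Fintype.prod_sum fun (_ : α) (b : Bool) => if b then p else 1 - p]
  simp

theorem pow_card_mul_Prw_force (P : α → Prop) [DecidablePred P] (p : ℝ)
    (B : (α → Bool) → Prop) :
    p ^ Fintype.card {i // P i} * Prw p (fun x => B fun i => if P i then true else x i) =
      Prw p (fun y => B y ∧ ∀ i, P i → y i = true) := by
  -- Split `x` into its parts on and off `P`; the forced configuration sees only the second one.
  set E := (Equiv.piEquivPiSubtypeProd P fun _ => Bool).symm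
  have hforce : ∀ a b, (fun i => if P i then true else E (a, b) i) = E (fun _ => true, b) := by
    intro a b; funext i; by_cases h : P i <;> simp [E, h]
  have htrue : ∀ a b, (∀ i, P i → E (a, b) i = true) ↔ a = fun _ => true := by
    intro a b; simp +contextual [E, funext_iff]
  simp only [Prw_eq_sum_bernoulliWeight, ← E.sum_comp, Fintype.sum_prod_type, hforce, htrue]
  simp only [E, bernoulliWeight_piEquivPiSubtypeProd_symm]
  rw [eq_comm, Fintype.sum_eq_single (fun _ => true) fun a ha =>
    sum_eq_zero fun b _ => if_neg fun h => ha h.2]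
  simp only [← mul_ite_zero, ← mul_sum, ← sum_mul, sum_bernoulliWeight, one_mul, and_true,
    bernoulliWeight_const_true]

theorem sum_Prw_le_one {ι : Type*} {p : ℝ} (hp : 0 ≤ p) (hp1 : p ≤ 1)
    (F : Finset ι) (A : ι → (α → Bool) → Prop)
    (hA : ∀ x, ∀ i ∈ F, ∀ j ∈ F, A i x → A j x → i = j) :
    ∑ i ∈ F, Prw p (A i) ≤ 1 :=
  calc ∑ i ∈ F, Prw p (A i) = ∑ x, (#{i ∈ F | A i x} : ℝ) * bernoulliWeight p x := by
        simp only [Prw_eq_sum_bernoulliWeight]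
        rw [sum_comm]
        simp only [← sum_filter, sum_const, nsmul_eq_mul]
    _ ≤ ∑ x : α → Bool, bernoulliWeight p x := by
        refine sum_le_sum fun x _ => ?_
        have hcard : #{i ∈ F | A i x} ≤ 1 := card_le_one.2 fun i hi j hj =>
          hA x i (mem_filter.1 hi).1 j (mem_filter.1 hj).1 (mem_filter.1 hi).2 (mem_filter.1 hj).2
        exact mul_le_of_le_one_left (bernoulliWeight_nonneg hp hp1 x) (by exact_mod_cast hcard)
    _ = 1 := sum_bernoulliWeight p

end Bernoulli

theorem Sym2.card_subtype_not_isDiag_forall_mem {α : Type*} [Fintype α] [DecidableEq α]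
    (s : Finset α) [Fintype {e : {z : Sym2 α // ¬z.IsDiag} // ∀ v ∈ e.1, v ∈ s}] :
    Fintype.card {e : {z : Sym2 α // ¬z.IsDiag} // ∀ v ∈ e.1, v ∈ s} = s.card.choose 2 := by
  rw [Fintype.card_congr (Equiv.subtypeSubtypeEquivSubtypeInter (fun z : Sym2 α => ¬z.IsDiag)
      fun z => ∀ v ∈ z, v ∈ s), Fintype.card_subtype,
    ← Sym2.card_image_offDiag, ← Sym2.filter_image_mk_not_isDiag, ← sym2_eq_image]
  congr 1
  ext z
  simp [mem_sym2_iff, and_comm]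

section PlantedClique

variable {n : ℕ}

def IsCliqueOn (y : EdgeType n → Bool) (T : Finset (Fin n)) : Prop :=
  ∀ e : EdgeType n, (∀ v ∈ e.1, v ∈ T) → y e = true

def SelectsAtMostOneClique (k : ℕ) (B : Finset (Fin n) → (EdgeType n → Bool) → Prop) : Prop :=
  ∀ y S₁ S₂, S₁.card = k → S₂.card = k → B S₁ y → B S₂ y → IsCliqueOn y S₁ → IsCliqueOn y S₂ →
    S₁ = S₂

theorem pow_mul_Prw_plantGraph (S : Finset (Fin n)) (p : ℝ) (B : (EdgeType n → Bool) → Prop) :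
    p ^ S.card.choose 2 * Prw p (fun x => B (plantGraph n S x)) =
      Prw p (fun y => B y ∧ IsCliqueOn y S) := by
  rw [← Sym2.card_subtype_not_isDiag_forall_mem S]
  exact pow_card_mul_Prw_force (fun e : EdgeType n => ∀ v ∈ e.1, v ∈ S) p B

theorem sum_pow_mul_Prw_plantGraph_le_one {k : ℕ} {p : ℝ} (hp : 0 ≤ p) (hp1 : p ≤ 1)
    (B : Finset (Fin n) → (EdgeType n → Bool) → Prop)
    (hB : SelectsAtMostOneClique k B) :
    ∑ S with S.card = k, p ^ k.choose 2 * Prw p (fun x => B S (plantGraph n S x)) ≤ 1 := by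
  rw [sum_congr rfl fun S hS => (mem_filter.1 hS).2 ▸ pow_mul_Prw_plantGraph S p (B S)]
  refine sum_Prw_le_one hp hp1 _ _ fun y S₁ hS₁ S₂ hS₂ h₁ h₂ => ?_
  exact hB y S₁ S₂ (mem_filter.1 hS₁).2 (mem_filter.1 hS₂).2 h₁.1 h₂.1 h₁.2 h₂.2

noncomputable def plantedProb (k : ℕ) (p : ℝ) (B : Finset (Fin n) → (EdgeType n → Bool) → Prop) :
    ℝ :=
  (n.choose k : ℝ)⁻¹ * ∑ S with S.card = k, Prw p (fun x => B S (plantGraph n S x))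

theorem plantedProb_le {k : ℕ} {p : ℝ} (hp : 0 < p) (hp1 : p ≤ 1)
    (B : Finset (Fin n) → (EdgeType n → Bool) → Prop)
    (hB : SelectsAtMostOneClique k B) :
    plantedProb k p B ≤ ((n.choose k : ℝ) * p ^ k.choose 2)⁻¹ := by
  rw [plantedProb, mul_inv]
  gcongr
  rw [← one_div, le_div_iff₀' (by positivity), mul_sum]
  exact sum_pow_mul_Prw_plantGraph_le_one hp.le hp1 B hB

end PlantedClique

open scoped Classical in
theorem planted_clique_nothing_general (n k : ℕ)
    (p : ℝ) (hp : 0 < p) (hp1 : p < 1)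
    (hbig : (100 : ℝ) ≤ (n.choose k : ℝ) * p ^ (k.choose 2)) :
    ((n.choose k : ℝ))⁻¹ *
      (∑ S ∈ Finset.univ.filter (fun S : Finset (Fin n) => S.card = k),
        Prw p (fun x : EdgeType n → Bool => cliqueCount n k (plantGraph n S x) = 1))
      ≤ 0.01 ∧
    ∀ A : (EdgeType n → Bool) → Finset (Fin n),
      ((n.choose k : ℝ))⁻¹ *
        (∑ S ∈ Finset.univ.filter (fun S : Finset (Fin n) => S.card = k),
          Prw p (fun x : EdgeType n → Bool => A (plantGraph n S x) = S))
        < 0.9 := by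
  have hsmall : ∀ B, SelectsAtMostOneClique k B → plantedProb k p B ≤ 0.01 :=
    fun B hB => (plantedProb_le hp hp1.le B hB).trans <|
      (inv_anti₀ (by norm_num) hbig).trans_eq (by norm_num)
  refine ⟨hsmall (fun _ y => cliqueCount n k y = 1) fun y S₁ S₂ h₁ h₂ hZ _ hS₁ hS₂ => ?_,
    fun A => (hsmall (fun S y => A y = S) fun y S₁ S₂ _ _ h₁ h₂ _ _ => h₁.symm.trans h₂).trans_lt
      (by norm_num)⟩
  exact card_le_one.1 hZ.le S₁ (mem_filter.2 ⟨mem_univ _, h₁, hS₁⟩) S₂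
    (mem_filter.2 ⟨mem_univ _, h₂, hS₂⟩)

open scoped Classical in
/-- If `C(n,k)·p^{C(k,2)} ≥ 100`, then in the planted `k`-clique model the probability
that the observed graph contains exactly one `k`-clique is at most `0.01`; consequently
no estimator exactly recovers the planted clique with probability `≥ 0.9`. -/
theorem planted_clique_nothing (n k : ℕ) (hk : 2 ≤ k) (hkn : k ≤ n)
    (p : ℝ) (hp : 0 < p) (hp1 : p < 1)
    (hbig : (100 : ℝ) ≤ (n.choose k : ℝ) * p ^ (k.choose 2)) :
    ((n.choose k : ℝ))⁻¹ *
      (∑ S ∈ Finset.univ.filter (fun S : Finset (Fin n) => S.card = k),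
        Prw p (fun x : EdgeType n → Bool => cliqueCount n k (plantGraph n S x) = 1))
      ≤ 0.01 ∧
    ∀ A : (EdgeType n → Bool) → Finset (Fin n),
      ((n.choose k : ℝ))⁻¹ *
        (∑ S ∈ Finset.univ.filter (fun S : Finset (Fin n) => S.card = k),
          Prw p (fun x : EdgeType n → Bool => A (plantGraph n S x) = S))
        < 0.9 :=
  planted_clique_nothing_general n k p hp hp1 hbig
end

section
/- Let ℓ, k, n ∈ ℕ with 1 ≤ ℓ ≤ (1−δ')k for some constant δ' ∈ (0,1), and k = o(n). Then binom(k,ℓ)·binom(n−k, k−ℓ)·binom(n,k)^{−1} ≤ (e·k²/(ℓ(n−2k)))^ℓ for large enough n, and binom(n,k)^{ℓ²/k²} ≤ (ne/k)^{ℓ²/k}. Consequently, the ℓ-th term in the planted-clique first-moment bound satisfies binom(k,ℓ)·binom(n−k,k−ℓ)·binom(n,k)^{−1+ℓ²/k²} ≤ F(ℓ)^ℓ where F(ℓ) := e²·(k²/(ℓ(n−2k)))·(n/k)^{ℓ/k}, and ℓ ↦ log F(ℓ) is convex on [1, (1−δ')k], so max_{1≤ℓ≤(1−δ')k} F(ℓ)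 ≤ max{F(1), F((1−δ')k)}. -/
/-!
`C(k,ℓ) ≤ (ek/ℓ)^ℓ` follows from `C(k,ℓ) ≤ k^ℓ/ℓ!` and `ℓ^ℓ/ℓ! ≤ e^ℓ`. Stepping from `C(n,m)` up
to `C(n,m+1)` multiplies by `(n-m)/(m+1) ≥ (n-2k)/k` while `m < k`, so
`C(n-k,k-ℓ)/C(n,k) ≤ C(n,k-ℓ)/C(n,k) ≤ (k/(n-2k))^ℓ`. Raising `C(n,k) ≤ (ne/k)^k` to the power
`ℓ²/k²` gives the second bound, and in the product the factor `e^{ℓ²/k}` is at most `e^ℓ`.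
Finally `log F(ℓ) = log(e²k²/(n-2k)) - log ℓ + ℓ·log(n/k)/k` is convex in `ℓ > 0`, so `F` is
maximal at an endpoint of any interval.
-/

open Filter Topology

theorem Nat.choose_le_exp_mul_div_pow (n r : ℕ) :
    (n.choose r : ℝ) ≤ (Real.exp 1 * n / r) ^ r := by
  rcases r.eq_zero_or_pos with rfl | hr
  · simp
  have hr' : (0 : ℝ) < r := by exact_mod_cast hr
  calc (n.choose r : ℝ) ≤ (n : ℝ) ^ r / r.factorial := Nat.choose_le_pow_div r n
    _ = (n / r : ℝ) ^ r * ((r : ℝ) ^ r / r.factorial) := by rw [div_pow]; field_simp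
    _ ≤ (n / r : ℝ) ^ r * Real.exp r := by gcongr; exact Real.pow_div_factorial_le_exp _ hr'.le r
    _ = (Real.exp 1 * n / r) ^ r := by rw [← Real.exp_one_pow]; ring

theorem Nat.choose_mul_sub_two_mul_le_mul_choose_succ {n k m : ℕ} (hkn : 2 * k ≤ n)
    (hmk : m < k) : n.choose m * (n - 2 * k) ≤ k * n.choose (m + 1) := by
  refine Nat.le_of_mul_le_mul_right ?_ m.succ_pos
  calc n.choose m * (n - 2 * k) * (m + 1) ≤ n.choose m * ((n - m) * k) := by
        rw [mul_assoc]; exact Nat.mul_le_mul_left _ (Nat.mul_le_mul (by omega) hmk)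
    _ = k * n.choose (m + 1) * (m + 1) := by rw [← mul_assoc, ← Nat.choose_succ_right_eq]; ring

theorem Nat.choose_sub_mul_pow_le_pow_mul_choose {n k ℓ : ℕ} (hkn : 2 * k ≤ n) (hℓk : ℓ ≤ k) :
    n.choose (k - ℓ) * (n - 2 * k) ^ ℓ ≤ k ^ ℓ * n.choose k := by
  induction ℓ with
  | zero => simp
  | succ ℓ ih =>
    have hstep := Nat.choose_mul_sub_two_mul_le_mul_choose_succ (m := k - (ℓ + 1)) hkn (by omega)
    rw [show k - (ℓ + 1) + 1 = k - ℓ by omega] at hstep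
    calc n.choose (k - (ℓ + 1)) * (n - 2 * k) ^ (ℓ + 1)
        = n.choose (k - (ℓ + 1)) * (n - 2 * k) * (n - 2 * k) ^ ℓ := by ring
      _ ≤ k * (n.choose (k - ℓ) * (n - 2 * k) ^ ℓ) := by
        rw [← mul_assoc]; exact Nat.mul_le_mul_right _ hstep
      _ ≤ k * (k ^ ℓ * n.choose k) := Nat.mul_le_mul_left _ (ih (by omega))
      _ = k ^ (ℓ + 1) * n.choose k := by ring

theorem cast_sub_two_mul_pos {n k : ℕ} (hkn : 2 * k < n) : (0 : ℝ) < n - 2 * k := by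
  have : (2 * k : ℝ) < n := by exact_mod_cast hkn
  linarith

theorem choose_mul_choose_div_choose_le {n k ℓ : ℕ} (hkn : 2 * k < n) (hℓk : ℓ ≤ k) :
    (k.choose ℓ : ℝ) * ((n - k).choose (k - ℓ) : ℝ) / (n.choose k : ℝ)
      ≤ (Real.exp 1 * (k : ℝ) ^ 2 / (ℓ * ((n : ℝ) - 2 * k))) ^ ℓ := by
  have hn2k := cast_sub_two_mul_pos hkn
  have hC : (0 : ℝ) < n.choose k := by exact_mod_cast Nat.choose_pos (by omega)
  have hsub : ((n - k).choose (k - ℓ) : ℝ) ≤ n.choose (k - ℓ) := by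
    exact_mod_cast Nat.choose_le_choose _ (Nat.sub_le n k)
  have hratio : (n.choose (k - ℓ) : ℝ) * ((n : ℝ) - 2 * k) ^ ℓ ≤ (k : ℝ) ^ ℓ * n.choose k := by
    have := Nat.choose_sub_mul_pow_le_pow_mul_choose hkn.le hℓk
    rw [← Nat.cast_le (α := ℝ)] at this
    push_cast [Nat.cast_sub hkn.le] at this
    exact this
  rw [div_le_iff₀ hC, show Real.exp 1 * (k : ℝ) ^ 2 / (ℓ * ((n : ℝ) - 2 * k))
      = Real.exp 1 * k / ℓ * (k / ((n : ℝ) - 2 * k)) by rw [div_mul_div_comm]; ring,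
    mul_pow, div_pow (k : ℝ)]
  calc (k.choose ℓ : ℝ) * ((n - k).choose (k - ℓ) : ℝ)
      ≤ (Real.exp 1 * k / ℓ) ^ ℓ * n.choose (k - ℓ) :=
        mul_le_mul (Nat.choose_le_exp_mul_div_pow k ℓ) hsub (by positivity) (by positivity)
    _ ≤ (Real.exp 1 * k / ℓ) ^ ℓ * ((k : ℝ) ^ ℓ / ((n : ℝ) - 2 * k) ^ ℓ * n.choose k) := by
        gcongr
        rw [div_mul_eq_mul_div, le_div_iff₀ (by positivity)]
        exact hratio
    _ = _ := by ring

theorem choose_rpow_sq_div_sq_le {n k : ℕ} (hk : k ≠ 0) (x : ℝ) :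
    (n.choose k : ℝ) ^ (x ^ 2 / (k : ℝ) ^ 2) ≤ ((n : ℝ) * Real.exp 1 / k) ^ (x ^ 2 / (k : ℝ)) := by
  have hk' : (k : ℝ) ≠ 0 := by exact_mod_cast hk
  calc (n.choose k : ℝ) ^ (x ^ 2 / (k : ℝ) ^ 2)
      ≤ (((n : ℝ) * Real.exp 1 / k) ^ k) ^ (x ^ 2 / (k : ℝ) ^ 2) := by
        gcongr
        rw [mul_comm]
        exact Nat.choose_le_exp_mul_div_pow n k
    _ = ((n : ℝ) * Real.exp 1 / k) ^ (x ^ 2 / (k : ℝ)) := by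
        rw [← Real.rpow_natCast, ← Real.rpow_mul (by positivity)]
        congr 1
        field_simp

/-- The base `F(ℓ)` of the planted-clique first-moment bound. -/
noncomputable def firstMomentBase (n k : ℕ) (ℓ : ℝ) : ℝ :=
  Real.exp 2 * (k : ℝ) ^ 2 / (ℓ * ((n : ℝ) - 2 * k)) * ((n : ℝ) / (k : ℝ)) ^ (ℓ / (k : ℝ))

section firstMomentBase

variable {n k : ℕ}

theorem choose_mul_choose_mul_choose_rpow_le_firstMomentBase_pow {ℓ : ℕ} (hk : k ≠ 0)
    (hkn : 2 * k < n) (hℓk : ℓ ≤ k) :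
    (k.choose ℓ : ℝ) * ((n - k).choose (k - ℓ) : ℝ) *
        (n.choose k : ℝ) ^ (-(1 : ℝ) + (ℓ : ℝ) ^ 2 / (k : ℝ) ^ 2)
      ≤ firstMomentBase n k ℓ ^ ℓ := by
  have hn2k := cast_sub_two_mul_pos hkn
  have hC : (0 : ℝ) < n.choose k := by exact_mod_cast Nat.choose_pos (by omega)
  have hnk : (0 : ℝ) ≤ n / k := by positivity
  have hexp : Real.exp ((ℓ : ℝ) ^ 2 / k) ≤ Real.exp ℓ := by
    have : (ℓ : ℝ) ≤ k := by exact_mod_cast hℓk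
    rw [Real.exp_le_exp, div_le_iff₀ (by positivity), sq]
    gcongr
  have hY : (((n : ℝ) / k) ^ ((ℓ : ℝ) / k)) ^ ℓ = ((n : ℝ) / k) ^ ((ℓ : ℝ) ^ 2 / k) := by
    rw [← Real.rpow_mul_natCast hnk]
    ring_nf
  calc (k.choose ℓ : ℝ) * ((n - k).choose (k - ℓ) : ℝ) *
        (n.choose k : ℝ) ^ (-(1 : ℝ) + (ℓ : ℝ) ^ 2 / (k : ℝ) ^ 2)
      = (k.choose ℓ : ℝ) * ((n - k).choose (k - ℓ) : ℝ) / (n.choose k : ℝ) *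
          (n.choose k : ℝ) ^ ((ℓ : ℝ) ^ 2 / (k : ℝ) ^ 2) := by
        rw [Real.rpow_add hC, Real.rpow_neg_one]
        ring
    _ ≤ (Real.exp 1 * (k : ℝ) ^ 2 / (ℓ * ((n : ℝ) - 2 * k))) ^ ℓ *
          ((n : ℝ) * Real.exp 1 / k) ^ ((ℓ : ℝ) ^ 2 / (k : ℝ)) :=
        mul_le_mul (choose_mul_choose_div_choose_le hkn hℓk) (choose_rpow_sq_div_sq_le hk _)
          (by positivity) (by positivity)
    _ = (Real.exp 1 * (k : ℝ) ^ 2 / (ℓ * ((n : ℝ) - 2 * k))) ^ ℓ *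
          (((n : ℝ) / k) ^ ((ℓ : ℝ) ^ 2 / k) * Real.exp ((ℓ : ℝ) ^ 2 / k)) := by
        rw [mul_div_right_comm (n : ℝ), Real.mul_rpow hnk (Real.exp_pos 1).le, Real.exp_one_rpow]
    _ ≤ (Real.exp 1 * (k : ℝ) ^ 2 / (ℓ * ((n : ℝ) - 2 * k))) ^ ℓ *
          (((n : ℝ) / k) ^ ((ℓ : ℝ) ^ 2 / k) * Real.exp ℓ) := by
        gcongr
    _ = firstMomentBase n k ℓ ^ ℓ := by
        rw [firstMomentBase, ← hY, ← Real.exp_one_pow,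
          show Real.exp 2 = Real.exp 1 * Real.exp 1 by rw [← Real.exp_add]; norm_num]
        ring

theorem firstMomentBase_pos (hk : k ≠ 0) (hkn : 2 * k < n) {ℓ : ℝ} (hℓ : 0 < ℓ) :
    0 < firstMomentBase n k ℓ := by
  have hn2k := cast_sub_two_mul_pos hkn
  have hn : (0 : ℝ) < n := by exact_mod_cast (by omega : 0 < n)
  have hk' : (0 : ℝ) < k := by exact_mod_cast Nat.pos_of_ne_zero hk
  unfold firstMomentBase
  positivity

theorem log_firstMomentBase (hk : k ≠ 0) (hkn : 2 * k < n) {ℓ : ℝ} (hℓ : 0 < ℓ) :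
    Real.log (firstMomentBase n k ℓ)
      = Real.log (Real.exp 2 * (k : ℝ) ^ 2 / ((n : ℝ) - 2 * k)) - Real.log ℓ
        + Real.log ((n : ℝ) / k) / k * ℓ := by
  have hn2k := cast_sub_two_mul_pos hkn
  have hn : (0 : ℝ) < n := by exact_mod_cast (by omega : 0 < n)
  have hk' : (0 : ℝ) < k := by exact_mod_cast Nat.pos_of_ne_zero hk
  rw [firstMomentBase, div_mul_eq_div_div_swap, Real.log_mul (by positivity) (by positivity),
    Real.log_div (by positivity) hℓ.ne', Real.log_rpow (by positivity)]
  ring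

theorem convexOn_log_firstMomentBase (hk : k ≠ 0) (hkn : 2 * k < n) :
    ConvexOn ℝ (Set.Ioi 0) (fun ℓ => Real.log (firstMomentBase n k ℓ)) := by
  have hslope : 0 ≤ Real.log ((n : ℝ) / k) / k := by
    have hk' : (0 : ℝ) < k := by exact_mod_cast Nat.pos_of_ne_zero hk
    have : (k : ℝ) ≤ n := by exact_mod_cast (by omega : k ≤ n)
    have := Real.log_nonneg ((one_le_div hk').2 this)
    positivity
  have hsum : ConvexOn ℝ (Set.Ioi 0) fun ℓ : ℝ =>
      Real.log (Real.exp 2 * (k : ℝ) ^ 2 / ((n : ℝ) - 2 * k)) + -Real.log ℓ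
        + (Real.log ((n : ℝ) / k) / k) • ℓ :=
    ((convexOn_const _ (convex_Ioi 0)).add strictConcaveOn_log_Ioi.concaveOn.neg).add
      ((convexOn_id (convex_Ioi 0)).smul hslope)
  refine hsum.congr fun ℓ hℓ => ?_
  simp only [smul_eq_mul, log_firstMomentBase hk hkn hℓ]
  ring

end firstMomentBase

theorem le_on_segment_of_convexOn_log {E : Type*} [AddCommGroup E] [Module ℝ E] {s : Set E}
    {f : E → ℝ} (hf : ConvexOn ℝ s fun x => Real.log (f x)) (hpos : ∀ x ∈ s, 0 < f x)
    {x y z : E} (hx : x ∈ s) (hy : y ∈ s) (hz : z ∈ segment ℝ x y) :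
    f z ≤ max (f x) (f y) := by
  have hzs : z ∈ s := hf.1.segment_subset hx hy hz
  rcases le_max_iff.1 (hf.le_on_segment hx hy hz) with h | h
  · exact le_max_of_le_left ((Real.log_le_log_iff (hpos z hzs) (hpos x hx)).1 h)
  · exact le_max_of_le_right ((Real.log_le_log_iff (hpos z hzs) (hpos y hy)).1 h)

theorem eventually_two_mul_lt_of_tendsto_div_zero {k : ℕ → ℕ}
    (hk : Tendsto (fun n : ℕ => (k n : ℝ) / n) atTop (𝓝 0)) : ∀ᶠ n in atTop, 2 * k n < n := by
  filter_upwards [hk.eventually_lt_const (by norm_num : (0 : ℝ) < 1 / 2), eventually_gt_atTop 0]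
    with n hlt hn
  rw [div_lt_iff₀ (by exact_mod_cast hn)] at hlt
  exact_mod_cast (by linarith : (2 * k n : ℝ) < n)

theorem planted_clique_binomial_estimates_general (k : ℕ → ℕ) (hk1 : ∀ n, 1 ≤ k n)
    (hko : Tendsto (fun n : ℕ => (k n : ℝ) / n) atTop (nhds 0))
    (δ' : ℝ) (hδ : 0 < δ') :
    (∀ᶠ n : ℕ in atTop, ∀ ℓ : ℕ, 1 ≤ ℓ → (ℓ : ℝ) ≤ (1 - δ') * k n →
      ((k n).choose ℓ : ℝ) * ((n - k n).choose (k n - ℓ) : ℝ) / (n.choose (k n) : ℝ)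
        ≤ (Real.exp 1 * (k n : ℝ) ^ 2 / (ℓ * ((n : ℝ) - 2 * k n))) ^ ℓ) ∧
    (∀ᶠ n : ℕ in atTop, ∀ ℓ : ℕ, 1 ≤ ℓ → ℓ ≤ k n →
      (n.choose (k n) : ℝ) ^ ((ℓ : ℝ) ^ 2 / (k n : ℝ) ^ 2)
        ≤ ((n : ℝ) * Real.exp 1 / (k n : ℝ)) ^ ((ℓ : ℝ) ^ 2 / (k n : ℝ))) ∧
    (∀ᶠ n : ℕ in atTop, ∀ ℓ : ℕ, 1 ≤ ℓ → (ℓ : ℝ) ≤ (1 - δ') * k n →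
      ((k n).choose ℓ : ℝ) * ((n - k n).choose (k n - ℓ) : ℝ) *
        (n.choose (k n) : ℝ) ^ (-(1 : ℝ) + (ℓ : ℝ) ^ 2 / (k n : ℝ) ^ 2)
      ≤ (Real.exp 2 * (k n : ℝ) ^ 2 / (ℓ * ((n : ℝ) - 2 * k n)) *
          ((n : ℝ) / (k n : ℝ)) ^ ((ℓ : ℝ) / (k n : ℝ))) ^ ℓ) ∧
    (∀ᶠ n : ℕ in atTop,
      ConvexOn ℝ (Set.Icc (1 : ℝ) ((1 - δ') * k n))
        (fun ℓ : ℝ => Real.log (Real.exp 2 * (k n : ℝ) ^ 2 / (ℓ * ((n : ℝ) - 2 * k n)) *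
          ((n : ℝ) / (k n : ℝ)) ^ (ℓ / (k n : ℝ)))) ∧
      ∀ ℓ : ℝ, ℓ ∈ Set.Icc (1 : ℝ) ((1 - δ') * k n) →
        Real.exp 2 * (k n : ℝ) ^ 2 / (ℓ * ((n : ℝ) - 2 * k n)) *
            ((n : ℝ) / (k n : ℝ)) ^ (ℓ / (k n : ℝ))
          ≤ max
            (Real.exp 2 * (k n : ℝ) ^ 2 / (1 * ((n : ℝ) - 2 * k n)) *
              ((n : ℝ) / (k n : ℝ)) ^ ((1 : ℝ) / (k n : ℝ)))
            (Real.exp 2 * (k n : ℝ) ^ 2 / ((1 - δ') * k n * ((n : ℝ) - 2 * k n)) *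
              ((n : ℝ) / (k n : ℝ)) ^ ((1 - δ') * k n / (k n : ℝ)))) := by
  have hk n : k n ≠ 0 := Nat.one_le_iff_ne_zero.1 (hk1 n)
  have hℓk n (ℓ : ℕ) (hℓ : (ℓ : ℝ) ≤ (1 - δ') * k n) : ℓ ≤ k n := by
    exact_mod_cast hℓ.trans (mul_le_of_le_one_left (Nat.cast_nonneg _) (by linarith))
  refine ⟨?_, ?_, ?_, ?_⟩ <;> filter_upwards [eventually_two_mul_lt_of_tendsto_div_zero hko]
    with n hn
  · exact fun ℓ _ hℓ => choose_mul_choose_div_choose_le hn (hℓk n ℓ hℓ)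
  · exact fun ℓ _ _ => choose_rpow_sq_div_sq_le (hk n) ℓ
  · exact fun ℓ _ hℓ =>
      choose_mul_choose_mul_choose_rpow_le_firstMomentBase_pow (hk n) hn (hℓk n ℓ hℓ)
  · have hconv := (convexOn_log_firstMomentBase (hk n) hn).subset
      (fun ℓ hℓ => one_pos.trans_le hℓ.1) (convex_Icc 1 ((1 - δ') * k n))
    refine ⟨hconv, fun ℓ hℓ => ?_⟩
    have hB : 1 ≤ (1 - δ') * k n := hℓ.1.trans hℓ.2
    exact le_on_segment_of_convexOn_log hconv
      (fun x hx => firstMomentBase_pos (hk n) hn (one_pos.trans_le hx.1))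
      (Set.left_mem_Icc.2 hB) (Set.right_mem_Icc.2 hB) (by rwa [segment_eq_Icc hB])

/-- Binomial estimates for the planted-clique first moment in the range
`1 ≤ ℓ ≤ (1-δ')k`, `k = o(n)`: bounds on `C(k,ℓ)C(n-k,k-ℓ)/C(n,k)` and
`C(n,k)^{ℓ²/k²}`, the combined bound by `F(ℓ)^ℓ` with
`F(ℓ) = e²·k²/(ℓ(n-2k))·(n/k)^{ℓ/k}`, log-convexity of `F`, and the resulting
endpoint maximum principle. -/
theorem planted_clique_binomial_estimates (k : ℕ → ℕ) (hk1 : ∀ n, 1 ≤ k n)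
    (hko : Tendsto (fun n : ℕ => (k n : ℝ) / n) atTop (nhds 0))
    (δ' : ℝ) (hδ : 0 < δ') (hδ1 : δ' < 1) :
    (∀ᶠ n : ℕ in atTop, ∀ ℓ : ℕ, 1 ≤ ℓ → (ℓ : ℝ) ≤ (1 - δ') * k n →
      ((k n).choose ℓ : ℝ) * ((n - k n).choose (k n - ℓ) : ℝ) / (n.choose (k n) : ℝ)
        ≤ (Real.exp 1 * (k n : ℝ) ^ 2 / (ℓ * ((n : ℝ) - 2 * k n))) ^ ℓ) ∧
    (∀ᶠ n : ℕ in atTop, ∀ ℓ : ℕ, 1 ≤ ℓ → ℓ ≤ k n →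
      (n.choose (k n) : ℝ) ^ ((ℓ : ℝ) ^ 2 / (k n : ℝ) ^ 2)
        ≤ ((n : ℝ) * Real.exp 1 / (k n : ℝ)) ^ ((ℓ : ℝ) ^ 2 / (k n : ℝ))) ∧
    (∀ᶠ n : ℕ in atTop, ∀ ℓ : ℕ, 1 ≤ ℓ → (ℓ : ℝ) ≤ (1 - δ') * k n →
      ((k n).choose ℓ : ℝ) * ((n - k n).choose (k n - ℓ) : ℝ) *
        (n.choose (k n) : ℝ) ^ (-(1 : ℝ) + (ℓ : ℝ) ^ 2 / (k n : ℝ) ^ 2)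
      ≤ (Real.exp 2 * (k n : ℝ) ^ 2 / (ℓ * ((n : ℝ) - 2 * k n)) *
          ((n : ℝ) / (k n : ℝ)) ^ ((ℓ : ℝ) / (k n : ℝ))) ^ ℓ) ∧
    (∀ᶠ n : ℕ in atTop,
      ConvexOn ℝ (Set.Icc (1 : ℝ) ((1 - δ') * k n))
        (fun ℓ : ℝ => Real.log (Real.exp 2 * (k n : ℝ) ^ 2 / (ℓ * ((n : ℝ) - 2 * k n)) *
          ((n : ℝ) / (k n : ℝ)) ^ (ℓ / (k n : ℝ)))) ∧
      ∀ ℓ : ℝ, ℓ ∈ Set.Icc (1 : ℝ) ((1 - δ') * k n) →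
        Real.exp 2 * (k n : ℝ) ^ 2 / (ℓ * ((n : ℝ) - 2 * k n)) *
            ((n : ℝ) / (k n : ℝ)) ^ (ℓ / (k n : ℝ))
          ≤ max
            (Real.exp 2 * (k n : ℝ) ^ 2 / (1 * ((n : ℝ) - 2 * k n)) *
              ((n : ℝ) / (k n : ℝ)) ^ ((1 : ℝ) / (k n : ℝ)))
            (Real.exp 2 * (k n : ℝ) ^ 2 / ((1 - δ') * k n * ((n : ℝ) - 2 * k n)) *
              ((n : ℝ) / (k n : ℝ)) ^ ((1 - δ') * k n / (k n : ℝ)))) :=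
  planted_clique_binomial_estimates_general k hk1 hko δ' hδ
end
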